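/- arXiv:1404.0292 — 4 statements merged into one kernel-verified Lean document; each statement's English description precedes it below -/
import Mathlib

section
/- Let V be the ε-hermitian hyperbolic plane over a division algebra D with involution, and assume (D, ε) ≠ (F, +1). Then U_V(D) = 𝔄 · EU_V(D), where 𝔄 is the subgroup of diagonal matrices diag(a, τ(a)⁻¹) with a ∈ D^×, and EU_V(D) is the subgroup generated by the unipotent matrices (1, s; 0, 1) and (1, 0; t, 1) with τ(s) = −ε·s and τ(t) = −ε·t. -/
open Matrix Pointwise

set_option maxHeartbeats 1000000

/-- The group `EU_V(D)` for the hyperbolic `ε`-hermitian plane: the subgroup of the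
unit group of `M₂(D)` generated by the unipotent matrices `(1,s;0,1)` and `(1,0;s,1)`
with `τ(s) = -ε·s`. -/
def EUplane (D : Type*) [DivisionRing D] [StarRing D] (ε : D) :
    Subgroup (Matrix (Fin 2) (Fin 2) D)ˣ :=
  Subgroup.closure
    {G | ∃ s : D, star s = -ε * s ∧
      (G.val = !![1, s; 0, 1] ∨ G.val = !![1, 0; s, 1])}

namespace UHypAux

variable {D : Type*} [DivisionRing D] [StarRing D]

lemma ct_fin_two (a b c d : D) :
    (!![a,b;c,d])ᴴ = !![star a, star c; star b, star d] := by
  ext i j; fin_cases i <;> fin_cases j <;> simp [conjTranspose_apply]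

omit [DivisionRing D] [StarRing D] in
lemma fin2_ext [Zero D] {a b c d e f g h : D} (h1 : a = e) (h2 : b = f) (h3 : c = g)
    (h4 : d = h) : !![a,b;c,d] = !![e,f;g,h] := by subst h1 h2 h3 h4; rfl

omit [DivisionRing D] [StarRing D] in
lemma fin2_entries [Zero D] {a b c d e f g h : D} (H : !![a,b;c,d] = !![e,f;g,h]) :
    a = e ∧ b = f ∧ c = g ∧ d = h := by
  refine ⟨?_, ?_, ?_, ?_⟩
  · simpa using congrFun (congrFun H 0) 0
  · simpa using congrFun (congrFun H 0) 1
  · simpa using congrFun (congrFun H 1) 0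
  · simpa using congrFun (congrFun H 1) 1

/-- The unitary group of the hyperbolic plane as a subgroup. -/
def unitaryPlane (ε : D) : Subgroup (Matrix (Fin 2) (Fin 2) D)ˣ where
  carrier := {G | (G.val)ᴴ * !![0, 1; ε, 0] * G.val = !![0, 1; ε, 0]}
  one_mem' := by simp
  mul_mem' := by
    intro A B hA hB
    simp only [Set.mem_setOf_eq, Units.val_mul, conjTranspose_mul] at *
    calc (B.val)ᴴ * (A.val)ᴴ * !![0,1;ε,0] * (A.val * B.val)
        = (B.val)ᴴ * ((A.val)ᴴ * !![0,1;ε,0] * A.val) * B.val := by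
          simp only [mul_assoc]
      _ = !![0,1;ε,0] := by rw [hA, hB]
  inv_mem' := by
    intro G hG
    have hG' : (G.val)ᴴ * !![0,1;ε,0] * G.val = !![0,1;ε,0] := hG
    show ((G⁻¹).val)ᴴ * !![0,1;ε,0] * (G⁻¹).val = !![0,1;ε,0]
    have h1 : (G.val * (G⁻¹).val) = 1 := Units.mul_inv G
    have h2 : ((G⁻¹).val)ᴴ * ((G.val)ᴴ * !![0,1;ε,0] * G.val) * (G⁻¹).val
        = ((G.val * (G⁻¹).val))ᴴ * !![0,1;ε,0] * (G.val * (G⁻¹).val) := by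
      simp only [conjTranspose_mul, mul_assoc]
    rw [hG', h1, conjTranspose_one, one_mul, mul_one] at h2
    exact h2

def diagUnit (a : D) (ha : a ≠ 0) : (Matrix (Fin 2) (Fin 2) D)ˣ where
  val := !![a, 0; 0, (star a)⁻¹]
  inv := !![a⁻¹, 0; 0, star a]
  val_inv := by
    have ha' : (star a : D) ≠ 0 := star_ne_zero.mpr ha
    simp [Matrix.mul_fin_two, Matrix.one_fin_two, mul_inv_cancel₀, inv_mul_cancel₀, ha, ha']
  inv_val := by
    have ha' : (star a : D) ≠ 0 := star_ne_zero.mpr ha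
    simp [Matrix.mul_fin_two, Matrix.one_fin_two, mul_inv_cancel₀, inv_mul_cancel₀, ha, ha']

def upperUnit (s : D) : (Matrix (Fin 2) (Fin 2) D)ˣ where
  val := !![1, s; 0, 1]
  inv := !![1, -s; 0, 1]
  val_inv := by simp [Matrix.mul_fin_two, Matrix.one_fin_two]
  inv_val := by simp [Matrix.mul_fin_two, Matrix.one_fin_two]

def lowerUnit (s : D) : (Matrix (Fin 2) (Fin 2) D)ˣ where
  val := !![1, 0; s, 1]
  inv := !![1, 0; -s, 1]
  val_inv := by simp [Matrix.mul_fin_two, Matrix.one_fin_two]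
  inv_val := by simp [Matrix.mul_fin_two, Matrix.one_fin_two]

lemma upper_mem {ε : D} {s : D} (hs : star s = -ε * s) : upperUnit s ∈ EUplane D ε :=
  Subgroup.subset_closure ⟨s, hs, Or.inl rfl⟩

lemma lower_mem {ε : D} {s : D} (hs : star s = -ε * s) : lowerUnit s ∈ EUplane D ε :=
  Subgroup.subset_closure ⟨s, hs, Or.inr rfl⟩

lemma EU_le_unitary {ε : D} (hcom : ∀ x : D, ε * x = x * ε) (hsq : ε * ε = 1) :
    EUplane D ε ≤ unitaryPlane ε := by
  rw [EUplane, Subgroup.closure_le]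
  rintro G ⟨s, hs, h | h⟩
  · show (G.val)ᴴ * !![0,1;ε,0] * G.val = !![0,1;ε,0]
    rw [h, ct_fin_two, Matrix.mul_fin_two, Matrix.mul_fin_two]
    refine fin2_ext ?_ ?_ ?_ ?_ <;> simp [hs]
  · show (G.val)ᴴ * !![0,1;ε,0] * G.val = !![0,1;ε,0]
    rw [h, ct_fin_two, Matrix.mul_fin_two, Matrix.mul_fin_two]
    refine fin2_ext ?_ ?_ ?_ ?_ <;> simp [hs]
    rw [mul_assoc, ← hcom s, ← mul_assoc, hsq, one_mul]
    simp

lemma diag_unitary {ε : D} (hcom : ∀ x : D, ε * x = x * ε) (a : D) (ha : a ≠ 0) :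
    (!![a,0;0,(star a)⁻¹] : Matrix (Fin 2) (Fin 2) D)ᴴ * !![0,1;ε,0] * !![a,0;0,(star a)⁻¹]
      = !![0,1;ε,0] := by
  have ha' : (star a : D) ≠ 0 := star_ne_zero.mpr ha
  rw [ct_fin_two, Matrix.mul_fin_two, Matrix.mul_fin_two]
  refine fin2_ext ?_ ?_ ?_ ?_ <;>
    simp [star_inv₀, mul_inv_cancel₀, ha, ha']
  rw [mul_assoc, hcom a, ← mul_assoc, inv_mul_cancel₀ ha, one_mul]

end UHypAux

open UHypAux

/-- `U_V(D) = 𝔄 · EU_V(D)` for the hyperbolic plane, where `𝔄` consists of the diagonal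
matrices `diag(a, τ(a)⁻¹)`, excluding the case `D = F`, `ε = 1` (i.e. `τ` trivial
and `ε = 1`). -/
theorem unitary_hyperbolic_plane_decomposition {D : Type*} [DivisionRing D] [StarRing D]
    (ε : D) (hε : ε = 1 ∨ ε = -1)
    (hne : ¬ (ε = 1 ∧ ∀ x : D, star x = x)) :
    {G : (Matrix (Fin 2) (Fin 2) D)ˣ |
        (G.val)ᴴ * !![0, 1; ε, 0] * G.val = !![0, 1; ε, 0]}
      = {G : (Matrix (Fin 2) (Fin 2) D)ˣ |
          ∃ a : D, a ≠ 0 ∧ G.val = !![a, 0; 0, (star a)⁻¹]}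
        * ((EUplane D ε : Subgroup (Matrix (Fin 2) (Fin 2) D)ˣ) : Set (Matrix (Fin 2) (Fin 2) D)ˣ) := by
  have hsε : star ε = ε := by rcases hε with rfl | rfl <;> simp
  have hsq : ε * ε = 1 := by rcases hε with rfl | rfl <;> simp
  have hcom : ∀ x : D, ε * x = x * ε := by rcases hε with rfl | rfl <;> intro x <;> simp
  have hεne : ε ≠ 0 := by
    rcases hε with rfl | rfl
    · exact one_ne_zero
    · simp
  have hnegεinv : (-ε)⁻¹ = -ε := inv_eq_of_mul_eq_one_right (by rw [neg_mul_neg, hsq])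
  ext G
  simp only [Set.mem_setOf_eq]
  constructor
  · intro hG0
    -- derive the "second" unitarity relation  G J' Gᴴ = J'
    have hK1 : G.val * (G⁻¹).val = 1 := Units.mul_inv G
    have hJJ' : (!![0,1;ε,0] : Matrix (Fin 2) (Fin 2) D) * !![0,ε;1,0] = 1 := by
      rw [Matrix.mul_fin_two, Matrix.one_fin_two]
      refine fin2_ext ?_ ?_ ?_ ?_ <;> simp [hsq]
    have hJ'J : (!![0,ε;1,0] : Matrix (Fin 2) (Fin 2) D) * !![0,1;ε,0] = 1 := by
      rw [Matrix.mul_fin_two, Matrix.one_fin_two]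
      refine fin2_ext ?_ ?_ ?_ ?_ <;> simp [hsq]
    have t1 : (G.val)ᴴ * !![0,1;ε,0] = !![0,1;ε,0] * (G⁻¹).val := by
      calc (G.val)ᴴ * !![0,1;ε,0]
          = (G.val)ᴴ * !![0,1;ε,0] * (G.val * (G⁻¹).val) := by rw [hK1, mul_one]
        _ = ((G.val)ᴴ * !![0,1;ε,0] * G.val) * (G⁻¹).val := by simp only [mul_assoc]
        _ = !![0,1;ε,0] * (G⁻¹).val := by rw [hG0]
    have hGH : (G.val)ᴴ = !![0,1;ε,0] * (G⁻¹).val * !![0,ε;1,0] := by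
      calc (G.val)ᴴ = (G.val)ᴴ * (!![0,1;ε,0] * !![0,ε;1,0]) := by rw [hJJ', mul_one]
        _ = ((G.val)ᴴ * !![0,1;ε,0]) * !![0,ε;1,0] := by simp only [mul_assoc]
        _ = !![0,1;ε,0] * (G⁻¹).val * !![0,ε;1,0] := by rw [t1]
    have h2 : G.val * !![0,ε;1,0] * (G.val)ᴴ = !![0,ε;1,0] := by
      rw [hGH]
      calc G.val * !![0,ε;1,0] * (!![0,1;ε,0] * (G⁻¹).val * !![0,ε;1,0])
          = G.val * ((!![0,ε;1,0] * !![0,1;ε,0]) * ((G⁻¹).val * !![0,ε;1,0])) := by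
            simp only [mul_assoc]
        _ = G.val * (G⁻¹).val * !![0,ε;1,0] := by rw [hJ'J, one_mul, mul_assoc]
        _ = !![0,ε;1,0] := by rw [hK1, one_mul]
    -- entry equations
    obtain ⟨a, b, c, d, hV⟩ : ∃ a b c d, G.val = !![a,b;c,d] :=
      ⟨_, _, _, _, Matrix.eta_fin_two G.val⟩
    have hG := hG0
    rw [hV, ct_fin_two, Matrix.mul_fin_two, Matrix.mul_fin_two] at hG
    simp only [mul_zero, zero_mul, add_zero, zero_add, mul_one, one_mul] at hG
    obtain ⟨e00, e01, e10, e11⟩ := fin2_entries hG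
    rw [hV, ct_fin_two, Matrix.mul_fin_two, Matrix.mul_fin_two] at h2
    simp only [mul_zero, zero_mul, add_zero, zero_add, mul_one, one_mul] at h2
    obtain ⟨f00, f01, f10, f11⟩ := fin2_entries h2
    by_cases ha : a = 0
    · -- second column case : a = 0
      subst ha
      simp only [star_zero, zero_mul, mul_zero, add_zero, zero_add] at e01 f11
      -- e01 : star c * ε * b = 1 ; f11 : d * star c + c * ε * star d = 0
      have hb : b ≠ 0 := by
        intro h; rw [h, mul_zero] at e01; exact one_ne_zero e01.symm
      have hcb : star c * ε = b⁻¹ := by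
        have h := congrArg (· * b⁻¹) e01
        simpa [mul_assoc, mul_inv_cancel₀ hb] using h
      have hc0 : c ≠ 0 := by
        intro h
        rw [h, star_zero, zero_mul] at hcb
        exact inv_ne_zero hb hcb.symm
      have hc' : (star c : D) ≠ 0 := star_ne_zero.mpr hc0
      have hstarc : star c = b⁻¹ * ε := by
        calc star c = star c * (ε * ε) := by rw [hsq, mul_one]
          _ = (star c * ε) * ε := by rw [mul_assoc]
          _ = b⁻¹ * ε := by rw [hcb]
      have hcval : c = ε * (star b)⁻¹ := by
        rw [← star_star c, hstarc, StarMul.star_mul, hsε, star_inv₀]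
      -- a nonzero skew element s
      obtain ⟨s, hskew, hs0⟩ : ∃ s : D, star s = -ε * s ∧ s ≠ 0 := by
        rcases hε with rfl | rfl
        · push_neg at hne
          obtain ⟨x, hx⟩ := hne rfl
          refine ⟨x - star x, ?_, sub_ne_zero.mpr (Ne.symm hx)⟩
          rw [star_sub, star_star, neg_one_mul, neg_sub]
        · exact ⟨1, by simp, one_ne_zero⟩
      have hsinv : star (s⁻¹) = -ε * s⁻¹ := by
        rw [star_inv₀, hskew, _root_.mul_inv_rev, hnegεinv, mul_neg, ← hcom, ← neg_mul]
      have hnegsinv : star (-s⁻¹) = -ε * (-s⁻¹) := by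
        rw [star_neg, hsinv, neg_mul, neg_neg, mul_neg, neg_mul, neg_neg]
      -- the lower-left entry is skew after scaling
      have hv : star (c⁻¹ * d) = -ε * (c⁻¹ * d) := by
        apply mul_left_cancel₀ (mul_ne_zero hc0 hεne)
        have lhs : (c * ε) * star (c⁻¹ * d) = -d := by
          rw [StarMul.star_mul, star_inv₀, ← mul_assoc]
          have h := eq_neg_of_add_eq_zero_right f11
          -- h : c * ε * star d = -(d * star c)
          rw [h, neg_mul, mul_assoc, mul_inv_cancel₀ hc', mul_one]
        have rhs : (c * ε) * (-ε * (c⁻¹ * d)) = -d := by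
          rw [neg_mul, mul_neg, ← mul_assoc, mul_assoc c ε ε, hsq, mul_one,
            ← mul_assoc, mul_inv_cancel₀ hc0, one_mul]
        rw [lhs, rhs]
      have ha' : b * s⁻¹ ≠ 0 := mul_ne_zero hb (inv_ne_zero hs0)
      have hainv : (star (b * s⁻¹))⁻¹ = -((star b)⁻¹ * (s * ε)) := by
        rw [StarMul.star_mul, star_inv₀, _root_.mul_inv_rev, inv_inv, hskew, neg_mul,
          hcom s, mul_neg]
      refine Set.mem_mul.mpr ⟨diagUnit (b * s⁻¹) ha', ⟨b * s⁻¹, ha', rfl⟩,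
        upperUnit s * lowerUnit (-s⁻¹) * upperUnit s * upperUnit (c⁻¹ * d),
        mul_mem (mul_mem (mul_mem (upper_mem hskew) (lower_mem hnegsinv))
          (upper_mem hskew)) (upper_mem hv), ?_⟩
      apply Units.ext
      show !![b * s⁻¹, 0; 0, (star (b * s⁻¹))⁻¹] *
          (!![1, s; 0, 1] * !![1, 0; -s⁻¹, 1] * !![1, s; 0, 1] * !![1, c⁻¹ * d; 0, 1])
          = G.val
      have hW : (!![1, s; 0, 1] : Matrix (Fin 2) (Fin 2) D) * !![1, 0; -s⁻¹, 1] *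
          !![1, s; 0, 1] * !![1, c⁻¹ * d; 0, 1]
          = !![0, s; -s⁻¹, -(s⁻¹ * (c⁻¹ * d))] := by
        rw [Matrix.mul_fin_two, Matrix.mul_fin_two, Matrix.mul_fin_two]
        refine fin2_ext ?_ ?_ ?_ ?_ <;>
          simp [mul_inv_cancel₀ hs0, inv_mul_cancel₀ hs0, mul_neg, neg_mul]
      rw [hW, hV, Matrix.mul_fin_two]
      refine fin2_ext ?_ ?_ ?_ ?_
      · simp
      · simp only [zero_mul, mul_zero, add_zero, zero_add]
        rw [mul_assoc, inv_mul_cancel₀ hs0, mul_one]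
      · simp only [zero_mul, mul_zero, add_zero, zero_add]
        rw [hainv, neg_mul_neg, mul_assoc, ← hcom s, mul_assoc, mul_inv_cancel₀ hs0,
          mul_one, ← hcom, ← hcval]
      · simp only [zero_mul, mul_zero, add_zero, zero_add]
        rw [hainv, neg_mul_neg, mul_assoc, ← hcom s, mul_assoc, ← mul_assoc s,
          mul_inv_cancel₀ hs0, one_mul, ← mul_assoc, ← hcom, ← hcval, ← mul_assoc,
          mul_inv_cancel₀ hc0, one_mul]
    · -- first column case : a ≠ 0
      have ha' : (star a : D) ≠ 0 := star_ne_zero.mpr ha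
      -- t := star a * c is skew
      have ht : star (star a * c) = -ε * (star a * c) := by
        apply mul_left_cancel₀ hεne
        have lhs : ε * star (star a * c) = -(star a * c) := by
          rw [StarMul.star_mul, star_star, ← mul_assoc, hcom (star c)]
          exact eq_neg_of_add_eq_zero_left e00
        rw [lhs, neg_mul, mul_neg, ← mul_assoc, hsq, one_mul]
      -- s := a⁻¹ * b is skew
      have hs : star (a⁻¹ * b) = -ε * (a⁻¹ * b) := by
        apply mul_left_cancel₀ (mul_ne_zero ha hεne)
        have lhs : (a * ε) * star (a⁻¹ * b) = -b := by
          rw [StarMul.star_mul, star_inv₀, ← mul_assoc]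
          rw [eq_neg_of_add_eq_zero_right f00, neg_mul, mul_assoc,
            mul_inv_cancel₀ ha', mul_one]
        have rhs : (a * ε) * (-ε * (a⁻¹ * b)) = -b := by
          rw [neg_mul, mul_neg, ← mul_assoc, mul_assoc a ε ε, hsq, mul_one,
            ← mul_assoc, mul_inv_cancel₀ ha, one_mul]
        rw [lhs, rhs]
      refine Set.mem_mul.mpr ⟨diagUnit a ha, ⟨a, ha, rfl⟩,
        lowerUnit (star a * c) * upperUnit (a⁻¹ * b),
        mul_mem (lower_mem ht) (upper_mem hs), ?_⟩
      apply Units.ext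
      show !![a, 0; 0, (star a)⁻¹] * (!![1, 0; star a * c, 1] * !![1, a⁻¹ * b; 0, 1])
          = G.val
      rw [hV, Matrix.mul_fin_two, Matrix.mul_fin_two]
      refine fin2_ext ?_ ?_ ?_ ?_
      · simp
      · simp only [zero_mul, mul_zero, add_zero, zero_add, one_mul, mul_one]
        rw [← mul_assoc, mul_inv_cancel₀ ha, one_mul]
      · simp only [zero_mul, mul_zero, add_zero, zero_add, one_mul, mul_one]
        rw [← mul_assoc, inv_mul_cancel₀ ha', one_mul]
      · simp only [zero_mul, mul_zero, add_zero, zero_add, one_mul, mul_one]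
        have h1 : (star a * c) * (a⁻¹ * b) = -(star c * ε * b) := by
          rw [eq_neg_of_add_eq_zero_right e00, neg_mul,
            mul_assoc (star c * ε) a, ← mul_assoc a, mul_inv_cancel₀ ha, one_mul]
        rw [h1]
        have h2' : -(star c * ε * b) + star a * d = star a * d - star c * ε * b := by
          rw [sub_eq_add_neg, add_comm]
        have h3 : -(star c * ε * b) + 1 = star a * d := by
          rw [← e01, neg_add_cancel_left]
        rw [h3, ← mul_assoc, inv_mul_cancel₀ ha', one_mul]
  · intro hmem
    rw [Set.mem_mul] at hmem
    obtain ⟨x, hx, y, hy, hxy⟩ := hmem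
    obtain ⟨a, ha, hxval⟩ := hx
    have hxu : x ∈ unitaryPlane ε := by
      show (x.val)ᴴ * !![0,1;ε,0] * x.val = !![0,1;ε,0]
      rw [hxval]; exact diag_unitary hcom a ha
    have hyu : y ∈ unitaryPlane ε := EU_le_unitary hcom hsq hy
    have hm := (unitaryPlane ε).mul_mem hxu hyu
    rw [hxy] at hm
    exact hm
end

section
/- The group EU_V(D) for the hyperbolic plane (n = 1) is perfect: [EU_V(D), EU_V(D)] = EU_V(D). -/
open scoped commutatorElement

set_option maxHeartbeats 1000000

/-!
Every generator `B(s)`, `C(s)` is a commutator `[h(α), B(u)]`, resp. `[h(α⁻¹), C(u)]`, where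
`h(α) = diag(α, α⁻¹)` and `u = c • s` for scalars `α, c ∈ F`: conjugation by `h(α)` multiplies
the upper corner by `α²` and the lower one by `α⁻²`, so one needs `(α² - 1) c = 1`, and an
infinite field has some `α` with `α² ≠ 1`. Since `F` is fixed by the involution, `u` lies in
`S_D` again, and `h(α)` lies in `EU_V(D)` as a product of two Weyl elements
`w(s) = B(s) C(-s⁻¹) B(s)` for any `0 ≠ s ∈ S_D`.
-/

namespace EUplane

section Matrices

variable {R : Type*} [Ring R]

def upperUnit (s : R) : (Matrix (Fin 2) (Fin 2) R)ˣ where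
  val := !![1, s; 0, 1]
  inv := !![1, -s; 0, 1]
  val_inv := by simp [Matrix.one_fin_two]
  inv_val := by simp [Matrix.one_fin_two]

def lowerUnit (s : R) : (Matrix (Fin 2) (Fin 2) R)ˣ where
  val := !![1, 0; s, 1]
  inv := !![1, 0; -s, 1]
  val_inv := by simp [Matrix.one_fin_two]
  inv_val := by simp [Matrix.one_fin_two]

@[simp]
theorem upperUnit_zero : upperUnit (0 : R) = 1 := by
  ext : 1
  simp [upperUnit, Matrix.one_fin_two]

@[simp]
theorem lowerUnit_zero : lowerUnit (0 : R) = 1 := by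
  ext : 1
  simp [lowerUnit, Matrix.one_fin_two]

def diagUnit (α : Rˣ) : (Matrix (Fin 2) (Fin 2) R)ˣ where
  val := !![(α : R), 0; 0, ↑α⁻¹]
  inv := !![↑α⁻¹, 0; 0, (α : R)]
  val_inv := by simp [Matrix.one_fin_two]
  inv_val := by simp [Matrix.one_fin_two]

def weylUnit (s : Rˣ) : (Matrix (Fin 2) (Fin 2) R)ˣ :=
  upperUnit (s : R) * lowerUnit (-(↑s⁻¹ : R)) * upperUnit (s : R)

theorem val_weylUnit (s : Rˣ) : (weylUnit s).val = !![0, (s : R); -↑s⁻¹, 0] := by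
  simp [weylUnit, upperUnit, lowerUnit]

theorem weylUnit_mul_weylUnit_neg {α s : Rˣ} (h : Commute (α : R) s) :
    weylUnit s * weylUnit (-(α⁻¹ * s)) = diagUnit α := by
  have h' : Commute (↑α⁻¹ : R) s := h.units_inv_left
  ext i j
  fin_cases i <;> fin_cases j <;>
    simp [val_weylUnit, diagUnit, Matrix.mul_apply, Fin.sum_univ_two, ← mul_assoc, h'.eq]

theorem diagUnit_commutator_upperUnit (α : Rˣ) (u : R) :
    ⁅diagUnit α, upperUnit u⁆ = upperUnit (α * u * α - u) := by
  ext : 1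
  simp [commutatorElement_def, diagUnit, upperUnit]
  abel

theorem diagUnit_commutator_lowerUnit (α : Rˣ) (u : R) :
    ⁅diagUnit α, lowerUnit u⁆ = lowerUnit (↑α⁻¹ * u * ↑α⁻¹ - u) := by
  ext : 1
  simp [commutatorElement_def, diagUnit, lowerUnit]
  abel

end Matrices

section Skew

variable {R : Type*} [Ring R] [StarRing R] {ε : R}

def skewSet (ε : R) : Set R := {s | star s = -ε * s}

theorem neg_mem_skewSet {s : R} (hs : s ∈ skewSet ε) : -s ∈ skewSet ε := by
  simp_all [skewSet]

theorem inv_mem_skewSet {D : Type*} [DivisionRing D] [StarRing D] {ε : D}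
    (hε : ε = 1 ∨ ε = -1) {s : D} (hs : s ∈ skewSet ε) : s⁻¹ ∈ skewSet ε := by
  rcases hε with rfl | rfl <;> simp_all [skewSet]

theorem algebraMap_mul_mem_skewSet {F : Type*} [CommSemiring F] [Algebra F R]
    (hstar : ∀ a : F, star (algebraMap F R a) = algebraMap F R a) (c : F) {s : R}
    (hs : s ∈ skewSet ε) : algebraMap F R c * s ∈ skewSet ε := by
  simp only [skewSet, Set.mem_ofPred_eq, star_mul, hstar] at hs ⊢
  rw [hs, Algebra.commutes, mul_assoc]

end Skew

theorem algebraMap_mul_mul_algebraMap_sub {F R : Type*} [Field F] [Ring R] [Algebra F R]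
    {b : F} (hb : b ^ 2 ≠ 1) (s : R) :
    algebraMap F R b * (algebraMap F R (b ^ 2 - 1)⁻¹ * s) * algebraMap F R b
      - algebraMap F R (b ^ 2 - 1)⁻¹ * s = s := by
  set x := algebraMap F R (b ^ 2 - 1)⁻¹ * s
  calc algebraMap F R b * x * algebraMap F R b - x = algebraMap F R (b ^ 2 - 1) * x := by
        rw [mul_assoc, ← Algebra.commutes, ← mul_assoc, ← map_mul, ← sq, map_sub, map_one,
          sub_mul, one_mul]
    _ = s := by
        rw [← mul_assoc, ← map_mul, mul_inv_cancel₀ (sub_ne_zero.2 hb), map_one, one_mul]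

theorem exists_unit_sq_ne_one (F : Type*) [Field F] [Infinite F] : ∃ u : Fˣ, (u : F) ^ 2 ≠ 1 := by
  classical
  obtain ⟨a, ha⟩ := Infinite.exists_notMem_finset ({0, 1, -1} : Finset F)
  simp only [Finset.mem_insert, Finset.mem_singleton, not_or] at ha
  exact ⟨Units.mk0 a ha.1, by simpa [sq_eq_one_iff] using ha.2⟩

section Membership

variable {D : Type*} [DivisionRing D] [StarRing D] {ε : D}

theorem upperUnit_mem {s : D} (hs : s ∈ skewSet ε) : upperUnit s ∈ EUplane D ε :=
  Subgroup.subset_closure ⟨s, hs, Or.inl rfl⟩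

theorem lowerUnit_mem {s : D} (hs : s ∈ skewSet ε) : lowerUnit s ∈ EUplane D ε :=
  Subgroup.subset_closure ⟨s, hs, Or.inr rfl⟩

theorem weylUnit_mem (hε : ε = 1 ∨ ε = -1) {s : Dˣ} (hs : (s : D) ∈ skewSet ε) :
    weylUnit s ∈ EUplane D ε := by
  have hs' : (↑s⁻¹ : D) ∈ skewSet ε := by
    simpa only [Units.val_inv_eq_inv_val] using inv_mem_skewSet hε hs
  exact mul_mem (mul_mem (upperUnit_mem hs) (lowerUnit_mem (neg_mem_skewSet hs')))
    (upperUnit_mem hs)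

variable {F : Type*} [CommSemiring F] [Algebra F D]

theorem diagUnit_algebraMap_mem (hε : ε = 1 ∨ ε = -1)
    (hstar : ∀ a : F, star (algebraMap F D a) = algebraMap F D a)
    {s : D} (hs0 : s ≠ 0) (hs : s ∈ skewSet ε) (u : Fˣ) :
    diagUnit (Units.map (algebraMap F D : F →* D) u) ∈ EUplane D ε := by
  set α := Units.map (algebraMap F D : F →* D) u
  set t := Units.mk0 s hs0
  have hα_inv_t : ((α⁻¹ * t : Dˣ) : D) ∈ skewSet ε :=
    algebraMap_mul_mem_skewSet hstar (↑u⁻¹ : F) hs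
  rw [← weylUnit_mul_weylUnit_neg (α := α) (s := t) (Algebra.commutes (u : F) s)]
  exact mul_mem (weylUnit_mem hε hs)
    (weylUnit_mem hε (by simpa using neg_mem_skewSet hα_inv_t))

end Membership

section Commutators

variable {D : Type*} [DivisionRing D] [StarRing D] {ε : D}
variable (F : Type*) [Field F] [Infinite F] [Algebra F D]

theorem upperUnit_mem_commutator (hε : ε = 1 ∨ ε = -1)
    (hstar : ∀ a : F, star (algebraMap F D a) = algebraMap F D a)
    {s : D} (hs : s ∈ skewSet ε) : upperUnit s ∈ ⁅EUplane D ε, EUplane D ε⁆ := by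
  rcases eq_or_ne s 0 with rfl | hs0
  · rw [upperUnit_zero]
    exact one_mem _
  obtain ⟨u, hu⟩ := exists_unit_sq_ne_one F
  have h := diagUnit_commutator_upperUnit (Units.map (algebraMap F D : F →* D) u)
    (algebraMap F D ((u : F) ^ 2 - 1)⁻¹ * s)
  rw [Units.coe_map, MonoidHom.coe_coe, algebraMap_mul_mul_algebraMap_sub hu] at h
  rw [← h]
  exact Subgroup.commutator_mem_commutator (diagUnit_algebraMap_mem hε hstar hs0 hs u)
    (upperUnit_mem (algebraMap_mul_mem_skewSet hstar _ hs))

theorem lowerUnit_mem_commutator (hε : ε = 1 ∨ ε = -1)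
    (hstar : ∀ a : F, star (algebraMap F D a) = algebraMap F D a)
    {s : D} (hs : s ∈ skewSet ε) : lowerUnit s ∈ ⁅EUplane D ε, EUplane D ε⁆ := by
  rcases eq_or_ne s 0 with rfl | hs0
  · rw [lowerUnit_zero]
    exact one_mem _
  obtain ⟨u, hu⟩ := exists_unit_sq_ne_one F
  have h := diagUnit_commutator_lowerUnit (Units.map (algebraMap F D : F →* D) u⁻¹)
    (algebraMap F D ((u : F) ^ 2 - 1)⁻¹ * s)
  rw [← map_inv, inv_inv, Units.coe_map, MonoidHom.coe_coe,
    algebraMap_mul_mul_algebraMap_sub hu] at h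
  rw [← h]
  exact Subgroup.commutator_mem_commutator (diagUnit_algebraMap_mem hε hstar hs0 hs u⁻¹)
    (lowerUnit_mem (algebraMap_mul_mem_skewSet hstar _ hs))

end Commutators

end EUplane

theorem EUplane_perfect_general {D : Type*} [DivisionRing D] [StarRing D]
    (F : Type*) [Field F] [Infinite F] [Algebra F D]
    (hstar : ∀ a : F, star (algebraMap F D a) = algebraMap F D a)
    (ε : D) (hε : ε = 1 ∨ ε = -1) :
    ⁅EUplane D ε, EUplane D ε⁆ = EUplane D ε := by
  refine le_antisymm (Subgroup.commutator_le_self _) ((Subgroup.closure_le _).2 ?_)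
  rintro G ⟨s, hs, hG | hG⟩
  · rw [show G = EUplane.upperUnit s from Units.ext hG]
    exact EUplane.upperUnit_mem_commutator F hε hstar hs
  · rw [show G = EUplane.lowerUnit s from Units.ext hG]
    exact EUplane.lowerUnit_mem_commutator F hε hstar hs

/-- For `D` a division algebra over a (local, hence infinite) field `F`, with involution
`τ = star` whose fixed field is `F`, and `ε = ±1`, the group `EU_V(D)` of the hyperbolic
plane is perfect: `[EU_V(D), EU_V(D)] = EU_V(D)`. -/
theorem EUplane_perfect {D : Type*} [DivisionRing D] [StarRing D]
    (F : Type*) [Field F] [Infinite F] [Algebra F D]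
    (hstar : ∀ a : F, star (algebraMap F D a) = algebraMap F D a)
    (hfix : ∀ x : D, star x = x → x ∈ Set.range (algebraMap F D))
    (ε : D) (hε : ε = 1 ∨ ε = -1) :
    ⁅EUplane D ε, EUplane D ε⁆ = EUplane D ε :=
  EUplane_perfect_general F hstar ε hε
end

section
/- Let ℍ be a quaternion division algebra over a field F. Then the commutator subgroup of ℍ^× equals SL₁(ℍ) = { x ∈ ℍ^× : Nrd(x) = 1 }, i.e., [ℍ^×, ℍ^×] = SL₁(ℍ). -/
/-!
The reduced norm `x ↦ x * star x` is multiplicative with commutative values, so commutators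
have norm one. Conversely, let `x * star x = 1`. If `x = -1` then `x = ⁅i, j⁆`. Otherwise pick
`u ≠ 0` with `u * x = star x * u` (conjugation by `u` negates the pure part of `x`); then
`x * (u * (1 + x)) = (1 + x) * u`, i.e. `x = ⁅1 + x, u⁆`.
-/

open scoped Quaternion commutatorElement

theorem mem_commutator_of_mul_mul_eq {G : Type*} [Group G] {x y u : G}
    (h : x * (u * y) = y * u) : x ∈ commutator G := by
  have hx : x = ⁅y, u⁆ := by rw [commutatorElement_def, ← h]; group
  rw [hx, commutator_def]
  exact Subgroup.commutator_mem_commutator (Subgroup.mem_top y) (Subgroup.mem_top u)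

theorem Units.mem_commutator_of_mul_mul_eq {M : Type*} [Monoid M] {x : Mˣ} {y u : M}
    (hy : IsUnit y) (hu : IsUnit u) (h : x * (u * y) = y * u) : x ∈ commutator Mˣ := by
  obtain ⟨y, rfl⟩ := hy
  obtain ⟨u, rfl⟩ := hu
  exact _root_.mem_commutator_of_mul_mul_eq (Units.ext h)

theorem mul_mul_one_add_eq {R : Type*} [Ring R] {x x' u : R} (hx : x * x' = 1)
    (hu : u * x = x' * u) : x * (u * (1 + x)) = (1 + x) * u :=
  calc x * (u * (1 + x))
      _ = x * u + x * x' * u := by rw [mul_add, mul_one, mul_add, hu, ← mul_assoc x x' u]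
      _ = (1 + x) * u := by rw [hx, one_mul, add_mul, one_mul, add_comm]

namespace QuaternionAlgebra

section ReducedNorm

variable {R : Type*} [CommRing R] {c₁ c₂ c₃ : R}

def reducedNorm : ℍ[R,c₁,c₂,c₃] →* R where
  toFun a := (a * star a).re
  map_one' := by simp
  map_mul' a b := by
    conv_lhs => rw [star_mul, mul_assoc, ← mul_assoc b, mul_star_eq_coe b, coe_commutes,
      ← mul_assoc, mul_star_eq_coe a, ← coe_mul, re_coe]

theorem mul_star_eq_coe_reducedNorm (a : ℍ[R,c₁,c₂,c₃]) : a * star a = reducedNorm a :=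
  mul_star_eq_coe a

theorem mul_star_eq_one_iff (a : ℍ[R,c₁,c₂,c₃]) : a * star a = 1 ↔ reducedNorm a = 1 := by
  rw [mul_star_eq_coe_reducedNorm, ← coe_one, coe_inj]

theorem commutator_units_le_ker_reducedNorm :
    commutator ℍ[R,c₁,c₂,c₃]ˣ ≤ (Units.map (reducedNorm : ℍ[R,c₁,c₂,c₃] →* R)).ker :=
  Abelianization.commutator_subset_ker _

end ReducedNorm

variable {R : Type*} [CommRing R] {c₁ c₂ : R}

theorem ne_zero_of_isUnit_i [Nontrivial R] (h : IsUnit (⟨0, 1, 0, 0⟩ : ℍ[R,c₁,c₂])) :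
    c₁ ≠ 0 := by
  intro hc
  refine (h.mul h).ne_zero ?_
  ext <;> simp [hc]

theorem ne_zero_of_isUnit_j [Nontrivial R] (h : IsUnit (⟨0, 0, 1, 0⟩ : ℍ[R,c₁,c₂])) :
    c₂ ≠ 0 := by
  intro hc
  refine (h.mul h).ne_zero ?_
  ext <;> simp [hc]

theorem neg_one_mul_j_mul_i :
    -1 * ((⟨0, 0, 1, 0⟩ : ℍ[R,c₁,c₂]) * ⟨0, 1, 0, 0⟩) = ⟨0, 1, 0, 0⟩ * ⟨0, 0, 1, 0⟩ := by
  ext <;> simp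

theorem exists_ne_zero_mul_eq_star_mul [IsDomain R] (hc₁ : c₁ ≠ 0) (hc₂ : c₂ ≠ 0)
    (x : ℍ[R,c₁,c₂]) : ∃ u : ℍ[R,c₁,c₂], u ≠ 0 ∧ u * x = star x * u := by
  by_cases hx : x.imI = 0 ∧ x.imJ = 0
  · refine ⟨⟨0, 1, 0, 0⟩, fun h => one_ne_zero (congrArg imI h), ?_⟩
    ext <;> simp [hx.1, hx.2]
  -- Pure quaternions anticommute iff they are orthogonal for the norm form, and this `u` is.
  · refine ⟨⟨0, x.imJ * c₂, -(x.imI * c₁), 0⟩, fun h => hx ?_, ?_⟩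
    · have hI := congrArg imI h
      have hJ := congrArg imJ h
      simp only [imI_zero, imJ_zero, neg_eq_zero, mul_eq_zero, hc₁, hc₂, or_false] at hI hJ
      exact ⟨hJ, hI⟩
    · ext <;> simp <;> ring

end QuaternionAlgebra

open QuaternionAlgebra in
theorem quaternion_commutator_eq_SL1_general (F : Type*) [Field F]
    (c₁ c₂ : F) (hdiv : ∀ x : ℍ[F,c₁,c₂], x ≠ 0 → IsUnit x) :
    ∀ x : ℍ[F,c₁,c₂]ˣ,
      x ∈ commutator ℍ[F,c₁,c₂]ˣ ↔ x.val * star x.val = 1 := by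
  intro x
  rw [mul_star_eq_one_iff]
  refine ⟨fun hx => congrArg Units.val (commutator_units_le_ker_reducedNorm hx), fun hx => ?_⟩
  have hi := hdiv ⟨0, 1, 0, 0⟩ fun h => one_ne_zero (congrArg imI h)
  have hj := hdiv ⟨0, 0, 1, 0⟩ fun h => one_ne_zero (congrArg imJ h)
  by_cases hx₁ : x.val = -1
  · exact Units.mem_commutator_of_mul_mul_eq hi hj (hx₁ ▸ neg_one_mul_j_mul_i)
  obtain ⟨u, hu₀, hu⟩ :=
    exists_ne_zero_mul_eq_star_mul (ne_zero_of_isUnit_i hi) (ne_zero_of_isUnit_j hj) x.val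
  have hy : 1 + x.val ≠ 0 := fun h => hx₁ (eq_neg_of_add_eq_zero_right h)
  exact Units.mem_commutator_of_mul_mul_eq (hdiv _ hy) (hdiv u hu₀)
    (mul_mul_one_add_eq ((mul_star_eq_one_iff _).mpr hx) hu)

/-- For a quaternion division algebra `ℍ` over a field `F` (char `≠ 2`), the commutator
subgroup of `ℍ^×` is the reduced norm one group: `[ℍ^×, ℍ^×] = SL₁(ℍ)`, where
`Nrd(x) = x · x̄`. -/
theorem quaternion_commutator_eq_SL1 (F : Type*) [Field F] (h2 : (2 : F) ≠ 0)
    (c₁ c₂ : F) (hdiv : ∀ x : ℍ[F,c₁,c₂], x ≠ 0 → IsUnit x) :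
    ∀ x : ℍ[F,c₁,c₂]ˣ,
      x ∈ commutator ℍ[F,c₁,c₂]ˣ ↔ x.val * star x.val = 1 :=
  quaternion_commutator_eq_SL1_general F c₁ c₂ hdiv
end

section
/- Let ℍ be a quaternion algebra over F with standard basis {1, i, j, k}, i² = −α, and F₁ = F(i). For the one-dimensional right skew-hermitian space V = ℍ with form ⟨x, y⟩ = x̄·i·y, the unitary group U(V) equals SL₁(F₁) = { x ∈ F₁^× : N_{F₁/F}(x) = 1 }, and the similitude group GU(V) equals F₁^× ∪ F₁^×·j. -/
/-!
Write `g = z + w j` with `z, w ∈ F₁ = F(i)`. As `j` anticommutes with `i` and conjugates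
`F₁`, `ḡ i g = (N z - β N w) i + 2 i z̄ w j`. So `ḡ i g ∈ F i` exactly when `z̄ w = 0`, i.e.
(`F₁` being a field inside the division algebra `ℍ`) when `g ∈ F₁` or `g ∈ F₁ j`, and the
similitude factor is then `nrd g` or `-nrd g`. For `U(V)` the second case is impossible:
`g ∈ F₁ j` is pure, so `nrd (1 + g) = 1 + nrd g`, and `nrd g = -1` would make `1 + g` a
nonzero element of norm `0`.
-/

open scoped Quaternion

namespace QuaternionAlgebra

theorem eq_zero_of_re_mul_star_eq_zero {R : Type*} [CommRing R] {c₁ c₂ c₃ : R}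
    (hdiv : ∀ x : ℍ[R,c₁,c₂,c₃], x ≠ 0 → IsUnit x) {x : ℍ[R,c₁,c₂,c₃]}
    (h : (x * star x).re = 0) : x = 0 := by
  by_contra hx
  have hnorm : x * star x = 0 := by rw [mul_star_eq_coe, h, coe_zero]
  exact hx (star_eq_zero.mp ((hdiv x hx).mul_right_eq_zero.mp hnorm))

section CommRing

variable {R : Type*} [CommRing R] {α β : R}

theorem re_mul_star_eq (x : ℍ[R,-α,-β]) :
    (x * star x).re = x.re ^ 2 + α * x.imI ^ 2 + β * (x.imJ ^ 2 + α * x.imK ^ 2) := by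
  simp only [re_mul, re_star, imI_star, imJ_star, imK_star]
  ring

theorem star_mul_i_mul (g : ℍ[R,-α,-β]) :
    star g * ⟨0, 1, 0, 0⟩ * g =
      ⟨0, g.re ^ 2 + α * g.imI ^ 2 - β * (g.imJ ^ 2 + α * g.imK ^ 2),
        2 * α * (g.imI * g.imJ - g.re * g.imK), 2 * (g.re * g.imJ + α * g.imI * g.imK)⟩ := by
  ext <;> simp <;> ring

end CommRing

/-- `(a - b i)(c + d i) = (a c + α b d) + (a d - b c) i` in `R[i]`, `i² = -α`. -/
theorem eq_zero_or_eq_zero_of_conj_mul_eq_zero {R : Type*} [CommRing R] [NoZeroDivisors R]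
    {α a b c d : R} (hN : a ^ 2 + α * b ^ 2 = 0 → a = 0 ∧ b = 0)
    (hre : a * c + α * b * d = 0) (him : a * d - b * c = 0) :
    (a = 0 ∧ b = 0) ∨ (c = 0 ∧ d = 0) := by
  by_cases hN0 : a ^ 2 + α * b ^ 2 = 0
  · exact Or.inl (hN hN0)
  · have hc : (a ^ 2 + α * b ^ 2) * c = 0 := by linear_combination a * hre - α * b * him
    have hd : (a ^ 2 + α * b ^ 2) * d = 0 := by linear_combination a * him + b * hre
    exact Or.inr ⟨(mul_eq_zero.mp hc).resolve_left hN0, (mul_eq_zero.mp hd).resolve_left hN0⟩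

section Division

variable {F : Type*} [Field F] {α β : F}

theorem eq_zero_of_sq_add_mul_sq_eq_zero (hdiv : ∀ x : ℍ[F,-α,-β], x ≠ 0 → IsUnit x)
    {a b : F} (h : a ^ 2 + α * b ^ 2 = 0) : a = 0 ∧ b = 0 := by
  have hz : (⟨a, b, 0, 0⟩ : ℍ[F,-α,-β]) = 0 :=
    eq_zero_of_re_mul_star_eq_zero hdiv (by rw [re_mul_star_eq]; linear_combination h)
  exact ⟨congrArg re hz, congrArg imI hz⟩

theorem ne_zero_of_forall_isUnit (hdiv : ∀ x : ℍ[F,-α,-β], x ≠ 0 → IsUnit x) : α ≠ 0 :=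
  fun hα => one_ne_zero (eq_zero_of_sq_add_mul_sq_eq_zero hdiv (a := 0) (b := 1) (by simp [hα])).2

theorem re_mul_star_ne_neg_one (hdiv : ∀ x : ℍ[F,-α,-β], x ≠ 0 → IsUnit x)
    {g : ℍ[F,-α,-β]} (hg : g.re = 0) : (g * star g).re ≠ -1 := by
  intro h
  have h1g : 1 + g = 0 := by
    refine eq_zero_of_re_mul_star_eq_zero hdiv ?_
    rw [re_mul_star_eq] at h ⊢
    simp only [re_add, imI_add, imJ_add, imK_add, re_one, imI_one, imJ_one, imK_one, hg] at h ⊢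
    linear_combination h
  simpa [hg] using congrArg re h1g

theorem star_mul_i_mul_eq_coe_mul_i_iff (h2 : (2 : F) ≠ 0)
    (hdiv : ∀ x : ℍ[F,-α,-β], x ≠ 0 → IsUnit x) (g : ℍ[F,-α,-β]) (μ : F) :
    star g * ⟨0, 1, 0, 0⟩ * g = (μ : ℍ[F,-α,-β]) * ⟨0, 1, 0, 0⟩ ↔
      (g.imJ = 0 ∧ g.imK = 0 ∧ μ = (g * star g).re) ∨
        (g.re = 0 ∧ g.imI = 0 ∧ μ = -(g * star g).re) := by
  rw [star_mul_i_mul, coe_mul_eq_smul, re_mul_star_eq, QuaternionAlgebra.ext_iff]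
  simp only [re_smul, imI_smul, imJ_smul, imK_smul, smul_eq_mul, mul_zero, mul_one, true_and]
  constructor
  · rintro ⟨hμ, hJ, hK⟩
    have hα := ne_zero_of_forall_isUnit hdiv
    have hre : g.re * g.imJ + α * g.imI * g.imK = 0 := (mul_eq_zero.mp hK).resolve_left h2
    have him : g.re * g.imK - g.imI * g.imJ = 0 := by
      linear_combination -(mul_eq_zero.mp hJ).resolve_left (mul_ne_zero h2 hα)
    rcases eq_zero_or_eq_zero_of_conj_mul_eq_zero (eq_zero_of_sq_add_mul_sq_eq_zero hdiv) hre him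
      with ⟨hr, hI⟩ | ⟨hJ0, hK0⟩
    · exact Or.inr ⟨hr, hI, by rw [hr, hI] at hμ ⊢; linear_combination -hμ⟩
    · exact Or.inl ⟨hJ0, hK0, by rw [hJ0, hK0] at hμ ⊢; linear_combination -hμ⟩
  · rintro (⟨hJ, hK, rfl⟩ | ⟨hr, hI, rfl⟩)
    · simp only [hJ, hK]
      exact ⟨by ring, by ring, by ring⟩
    · simp only [hr, hI]
      exact ⟨by ring, by ring, by ring⟩

end Division

end QuaternionAlgebra

open QuaternionAlgebra

theorem unitary_one_dim_skew_hermitian_general (F : Type*) [Field F] (h2 : (2 : F) ≠ 0)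
    (α β : F)
    (hdiv : ∀ x : ℍ[F,-α,-β], x ≠ 0 → IsUnit x) :
    (∀ g : ℍ[F,-α,-β], g ≠ 0 →
      ((star g * (⟨0, 1, 0, 0⟩ : ℍ[F,-α,-β]) * g = (⟨0, 1, 0, 0⟩ : ℍ[F,-α,-β])) ↔
        (g.imJ = 0 ∧ g.imK = 0 ∧ g * star g = 1)))
    ∧ (∀ g : ℍ[F,-α,-β], g ≠ 0 →
      ((∃ μ : F, μ ≠ 0 ∧
          star g * (⟨0, 1, 0, 0⟩ : ℍ[F,-α,-β]) * g
            = (μ : ℍ[F,-α,-β]) * (⟨0, 1, 0, 0⟩ : ℍ[F,-α,-β])) ↔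
        ((g.imJ = 0 ∧ g.imK = 0) ∨ (g.re = 0 ∧ g.imI = 0)))) := by
  refine ⟨fun g _ => ?_, fun g hg => ?_⟩
  · have hU := star_mul_i_mul_eq_coe_mul_i_iff h2 hdiv g 1
    rw [coe_one, one_mul] at hU
    rw [hU]
    constructor
    · rintro (⟨hJ, hK, h1⟩ | ⟨hr, -, h1⟩)
      · exact ⟨hJ, hK, by rw [mul_star_eq_coe, ← h1, coe_one]⟩
      · exact absurd (by linear_combination h1) (re_mul_star_ne_neg_one hdiv hr)
    · rintro ⟨hJ, hK, h1⟩
      exact Or.inl ⟨hJ, hK, by rw [h1, re_one]⟩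
  · have hnrd : (g * star g).re ≠ 0 := fun h => hg (eq_zero_of_re_mul_star_eq_zero hdiv h)
    simp_rw [star_mul_i_mul_eq_coe_mul_i_iff h2 hdiv g]
    constructor
    · rintro ⟨μ, -, ⟨hJ, hK, -⟩ | ⟨hr, hI, -⟩⟩
      exacts [Or.inl ⟨hJ, hK⟩, Or.inr ⟨hr, hI⟩]
    · rintro (⟨hJ, hK⟩ | ⟨hr, hI⟩)
      · exact ⟨_, hnrd, Or.inl ⟨hJ, hK, rfl⟩⟩
      · exact ⟨_, neg_ne_zero.mpr hnrd, Or.inr ⟨hr, hI, rfl⟩⟩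

/-- Let `ℍ = (−α, −β / F)` with standard basis `1, i, j, k` (`i² = −α`, `j² = −β`),
`F₁ = F(i)`, and let `V = ℍ` be the one-dimensional right skew-hermitian space with form
`⟨x, y⟩ = x̄·i·y`.  Then `U(V) = SL₁(F₁) = { x ∈ F₁^× : N_{F₁/F}(x) = 1 }` and
`GU(V) = F₁^× ∪ F₁^×·j`. -/
theorem unitary_one_dim_skew_hermitian (F : Type*) [Field F] (h2 : (2 : F) ≠ 0)
    (α β : F) (hα : α ≠ 0) (hβ : β ≠ 0)
    (hdiv : ∀ x : ℍ[F,-α,-β], x ≠ 0 → IsUnit x) :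
    (∀ g : ℍ[F,-α,-β], g ≠ 0 →
      ((star g * (⟨0, 1, 0, 0⟩ : ℍ[F,-α,-β]) * g = (⟨0, 1, 0, 0⟩ : ℍ[F,-α,-β])) ↔
        (g.imJ = 0 ∧ g.imK = 0 ∧ g * star g = 1)))
    ∧ (∀ g : ℍ[F,-α,-β], g ≠ 0 →
      ((∃ μ : F, μ ≠ 0 ∧
          star g * (⟨0, 1, 0, 0⟩ : ℍ[F,-α,-β]) * g
            = (μ : ℍ[F,-α,-β]) * (⟨0, 1, 0, 0⟩ : ℍ[F,-α,-β])) ↔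
        ((g.imJ = 0 ∧ g.imK = 0) ∨ (g.re = 0 ∧ g.imI = 0)))) :=
  unitary_one_dim_skew_hermitian_general F h2 α β hdiv
end
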